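/- arXiv:2207.06894 — 4 statements merged into one kernel-verified Lean document; each statement's English description precedes it below -/
import Mathlib

section
/- Let k be a positive even natural number and let D : (ZMod k → ZMod 2) → (ZMod k → ZMod 2) be the ℤ/2-linear map given by (D x)(j) = x(j-1) + x(j+1) when j is even and (D x)(j) = 0 when j is odd (parity of j ∈ ZMod k meaning parity of its canonical representative, which is well defined since k is even). Then x lies in the kernel of D if and only if all odd-index coordinates of x are equal, i.e. x(i) = x(i') for all i, i' ∈ ZMod k with odd canonical representative. -/
/-- A vector lies in the kernel of the combinatorial log Floer differential
iff all its odd-index coordinates agree. -/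
theorem log_floer_kernel_iff_odd_coords_equal
    (k : ℕ) (hk : 0 < k) (hke : Even k)
    (D : (ZMod k → ZMod 2) → (ZMod k → ZMod 2))
    (hD : ∀ x : ZMod k → ZMod 2, ∀ j : ZMod k,
      D x j = if Even j.val then x (j - 1) + x (j + 1) else 0) :
    ∀ x : ZMod k → ZMod 2,
      D x = 0 ↔ ∀ i i' : ZMod k, Odd i.val → Odd i'.val → x i = x i' := by
  haveI : NeZero k := ⟨hk.ne'⟩
  have hk2 : 2 ∣ k := hke.two_dvd
  have hk1 : 1 < k := by
    rcases hk2 with ⟨m, hm⟩; omega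
  haveI : Fact (1 < k) := ⟨hk1⟩
  have hpar : ∀ a b : ZMod k, (a + b).val % 2 = (a.val + b.val) % 2 := by
    intro a b
    rw [ZMod.val_add, Nat.mod_mod_of_dvd _ hk2]
  have hval1 : (1 : ZMod k).val = 1 := ZMod.val_one k
  intro x
  constructor
  · intro hx
    have step : ∀ i : ZMod k, Odd i.val → x i = x (i + 2) := by
      intro i hi
      have hio := Nat.odd_iff.mp hi
      have hje : Even ((i + 1).val) := by
        rw [Nat.even_iff, hpar, hval1]; omega
      have h0 : D x (i + 1) = 0 := by rw [hx]; rfl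
      rw [hD, if_pos hje] at h0
      have e1 : (i + 1) - 1 = i := by ring
      have e2 : (i + 1) + 1 = i + 2 := by ring
      rw [e1, e2] at h0
      have := eq_neg_of_add_eq_zero_left h0
      rwa [CharTwo.neg_eq] at this
    have iter : ∀ (t : ℕ) (i : ZMod k), Odd i.val →
        x (i + ((2 * t : ℕ) : ZMod k)) = x i := by
      intro t
      induction t with
      | zero => intro i hi; simp
      | succ n ih =>
        intro i hi
        have hodd : Odd ((i + ((2 * n : ℕ) : ZMod k)).val) := by
          rw [Nat.odd_iff, hpar, ZMod.val_natCast,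
            Nat.add_mod, Nat.mod_mod_of_dvd _ hk2]
          have hio := Nat.odd_iff.mp hi
          omega
        have e : (i + ((2 * (n + 1) : ℕ) : ZMod k))
            = (i + ((2 * n : ℕ) : ZMod k)) + 2 := by push_cast; ring
        rw [e, ← step _ hodd, ih i hi]
    intro i i' hi hi'
    have hio := Nat.odd_iff.mp hi
    have hio' := Nat.odd_iff.mp hi'
    set d := i' - i with hd
    have hid : i + d = i' := by rw [hd]; ring
    have hdeven : d.val % 2 = 0 := by
      have := hpar i d
      rw [hid] at this
      omega
    obtain ⟨m, hm⟩ : 2 ∣ d.val := Nat.dvd_of_mod_eq_zero hdeven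
    have hcast : ((2 * m : ℕ) : ZMod k) = d := by
      rw [← hm]
      simp [ZMod.natCast_val, ZMod.cast_id]
    have := iter m i hi
    rw [hcast, hid] at this
    exact this.symm
  · intro h
    funext j
    rw [hD]
    simp only [Pi.zero_apply]
    split_ifs with hj
    · have hje := Nat.even_iff.mp hj
      have h1 : Odd ((j - 1).val) := by
        have := hpar (j - 1) 1
        rw [sub_add_cancel, hval1] at this
        rw [Nat.odd_iff]
        omega
      have h2 : Odd ((j + 1).val) := by
        rw [Nat.odd_iff, hpar, hval1]
        omega
      rw [h (j - 1) (j + 1) h1 h2]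
      exact CharTwo.add_self_eq_zero _
    · rfl
end

section
/- Let k be a positive even natural number and let D : (ZMod k → ZMod 2) → (ZMod k → ZMod 2) be the ℤ/2-linear map given by (D x)(j) = x(j-1) + x(j+1) when j is even and (D x)(j) = 0 when j is odd (parity of j ∈ ZMod k meaning parity of its canonical representative, which is well defined since k is even). Then y lies in the range of D if and only if y(j) = 0 for every j with odd canonical representative and the sum of y(j) over all j with even canonical representative equals 0 in ZMod 2. -/
section Helpers
variable (k : ℕ) [NeZero k]

lemma two_le_of_even (hke : Even k) : 2 ≤ k := by
  have := NeZero.pos k; obtain ⟨c, rfl⟩ := hke; omega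

lemma my_val_one (hke : Even k) : (1 : ZMod k).val = 1 := by
  haveI : Fact (1 < k) := ⟨two_le_of_even k hke⟩
  exact ZMod.val_one k

lemma parity_add_one (hke : Even k) (j : ZMod k) :
    Even ((j + 1).val) ↔ ¬ Even j.val := by
  rw [ZMod.val_add, my_val_one k hke]
  rw [Nat.even_iff, Nat.even_iff, Nat.mod_mod_of_dvd _ hke.two_dvd]
  omega

lemma parity_sub_one (hke : Even k) (j : ZMod k) :
    Even ((j - 1).val) ↔ ¬ Even j.val := by
  have h := parity_add_one k hke (j - 1)
  rw [sub_add_cancel] at h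
  tauto

lemma val_add_one_of_even (hke : Even k) (j : ZMod k) (hj : Even j.val) :
    (j + 1).val = j.val + 1 := by
  have hlt : j.val < k := ZMod.val_lt j
  have : j.val + 1 < k := by
    obtain ⟨c, hc⟩ := hke; obtain ⟨d, hd⟩ := hj; omega
  rw [ZMod.val_add, my_val_one k hke, Nat.mod_eq_of_lt this]

lemma val_sub_one_of_pos (j : ZMod k) (hj : 0 < j.val) :
    (j - 1).val = j.val - 1 := by
  have hlt : j.val < k := ZMod.val_lt j
  have : j - 1 = ((j.val - 1 : ℕ) : ZMod k) := by
    conv_lhs => rw [← ZMod.natCast_zmod_val j]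
    push_cast [Nat.cast_sub hj]
    ring
  rw [this, ZMod.val_cast_of_lt (by omega)]

lemma neg_one_val (hke : Even k) : (-1 : ZMod k).val = k - 1 := by
  have h2 := two_le_of_even k hke
  have : (-1 : ZMod k) = ((k - 1 : ℕ) : ZMod k) := by
    push_cast [Nat.cast_sub (by omega : 1 ≤ k)]
    simp
  rw [this, ZMod.val_cast_of_lt (by omega)]

/-- The sum of `y` over even-valued indices equals a sum over `range (k/2)`. -/
lemma sum_even_eq (hke : Even k) (y : ZMod k → ZMod 2) :
    ∑ j ∈ Finset.univ.filter (fun j : ZMod k => Even j.val), y j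
      = ∑ m ∈ Finset.range (k / 2), y ((2 * m : ℕ) : ZMod k) := by
  obtain ⟨c, hc⟩ := hke
  refine Finset.sum_nbij' (fun j => j.val / 2) (fun m => ((2 * m : ℕ) : ZMod k)) ?_ ?_ ?_ ?_ ?_
  · intro j hj
    simp only [Finset.mem_filter, Finset.mem_univ, true_and] at hj
    simp only [Finset.mem_range]
    have hlt : j.val < k := ZMod.val_lt j
    obtain ⟨d, hd⟩ := hj
    omega
  · intro m hm
    simp only [Finset.mem_range] at hm
    simp only [Finset.mem_filter, Finset.mem_univ, true_and]
    rw [ZMod.val_cast_of_lt (by omega)]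
    exact ⟨m, by ring⟩
  · intro j hj
    simp only [Finset.mem_filter, Finset.mem_univ, true_and] at hj
    show ((2 * (j.val / 2) : ℕ) : ZMod k) = j
    obtain ⟨d, hd⟩ := hj
    have h : 2 * (j.val / 2) = j.val := by omega
    rw [h, ZMod.natCast_zmod_val]
  · intro m hm
    simp only [Finset.mem_range] at hm
    show ((2 * m : ℕ) : ZMod k).val / 2 = m
    rw [ZMod.val_cast_of_lt (by omega)]
    omega
  · intro j hj
    simp only [Finset.mem_filter, Finset.mem_univ, true_and] at hj
    obtain ⟨d, hd⟩ := hj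
    have h : 2 * (j.val / 2) = j.val := by omega
    show y j = y ((2 * (j.val / 2) : ℕ) : ZMod k)
    rw [h, ZMod.natCast_zmod_val]

end Helpers

/-- A vector lies in the range of the combinatorial log Floer differential iff
it vanishes on odd-index coordinates and the sum of its even-index coordinates is zero. -/
theorem log_floer_range_characterisation
    (k : ℕ) [NeZero k] (hke : Even k)
    (D : (ZMod k → ZMod 2) →ₗ[ZMod 2] (ZMod k → ZMod 2))
    (hD : ∀ x : ZMod k → ZMod 2, ∀ j : ZMod k,
      D x j = if Even j.val then x (j - 1) + x (j + 1) else 0) :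
    ∀ y : ZMod k → ZMod 2,
      y ∈ LinearMap.range D ↔
        ((∀ j : ZMod k, Odd j.val → y j = 0) ∧
          ∑ j ∈ Finset.univ.filter (fun j : ZMod k => Even j.val), y j = 0) := by
  intro y
  have h2k : 2 ≤ k := two_le_of_even k hke
  constructor
  · rintro ⟨x, rfl⟩
    constructor
    · intro j hj
      rw [hD, if_neg (by simpa [Nat.not_even_iff_odd] using hj)]
    · have hrw : ∑ j ∈ Finset.univ.filter (fun j : ZMod k => Even j.val), D x j
          = ∑ j ∈ Finset.univ.filter (fun j : ZMod k => Even j.val), (x (j-1) + x (j+1)) := by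
        apply Finset.sum_congr rfl
        intro j hj
        simp only [Finset.mem_filter, Finset.mem_univ, true_and] at hj
        rw [hD, if_pos hj]
      rw [hrw, Finset.sum_add_distrib]
      have h1 : ∑ j ∈ Finset.univ.filter (fun j : ZMod k => Even j.val), x (j - 1)
          = ∑ i ∈ Finset.univ.filter (fun i : ZMod k => ¬ Even i.val), x i := by
        refine Finset.sum_nbij' (fun j => j - 1) (fun i => i + 1) ?_ ?_ ?_ ?_ ?_
        · intro j hj
          simp only [Finset.mem_filter, Finset.mem_univ, true_and] at hj ⊢
          rw [parity_sub_one k hke]; tauto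
        · intro i hi
          simp only [Finset.mem_filter, Finset.mem_univ, true_and] at hi ⊢
          rw [parity_add_one k hke]; tauto
        · intro j _; show j - 1 + 1 = j; ring
        · intro i _; show i + 1 - 1 = i; ring
        · intro j _; rfl
      have h2 : ∑ j ∈ Finset.univ.filter (fun j : ZMod k => Even j.val), x (j + 1)
          = ∑ i ∈ Finset.univ.filter (fun i : ZMod k => ¬ Even i.val), x i := by
        refine Finset.sum_nbij' (fun j => j + 1) (fun i => i - 1) ?_ ?_ ?_ ?_ ?_
        · intro j hj
          simp only [Finset.mem_filter, Finset.mem_univ, true_and] at hj ⊢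
          rw [parity_add_one k hke]; tauto
        · intro i hi
          simp only [Finset.mem_filter, Finset.mem_univ, true_and] at hi ⊢
          rw [parity_sub_one k hke]; tauto
        · intro j _; show j + 1 - 1 = j; ring
        · intro i _; show i - 1 + 1 = i; ring
        · intro j _; rfl
      rw [h1, h2, CharTwo.add_self_eq_zero]
  · rintro ⟨h1, h2⟩
    set x : ZMod k → ZMod 2 := fun i =>
      if Even i.val then 0
      else ∑ m ∈ Finset.range ((i.val + 1) / 2), y ((2 * m : ℕ) : ZMod k) with hx
    have hxodd : ∀ i : ZMod k, ¬ Even i.val →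
        x i = ∑ m ∈ Finset.range ((i.val + 1) / 2), y ((2 * m : ℕ) : ZMod k) := by
      intro i hi
      simp only [hx]
      rw [if_neg hi]
    refine ⟨x, ?_⟩
    funext j
    rw [hD]
    by_cases hj : Even j.val
    · rw [if_pos hj]
      have hodd1 : ¬ Even (j + 1).val := (parity_add_one k hke j).not.mpr (by tauto)
      have hodd2 : ¬ Even (j - 1).val := (parity_sub_one k hke j).not.mpr (by tauto)
      rcases Nat.eq_zero_or_pos j.val with hv | hv
      · -- j = 0
        have hj0 : j = 0 := by
          have := ZMod.natCast_zmod_val j; rw [hv] at this; simpa using this.symm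
        subst hj0
        have hval1 : (0 + 1 : ZMod k).val = 1 := by
          rw [zero_add, my_val_one k hke]
        have hvalm1 : (0 - 1 : ZMod k).val = k - 1 := by
          rw [zero_sub, neg_one_val k hke]
        have hx1 : x (0 + 1) = y 0 := by
          rw [hxodd _ hodd1, hval1]
          norm_num
        have hxm1 : x (0 - 1) = 0 := by
          rw [hxodd _ hodd2, hvalm1]
          have heq : (k - 1 + 1) / 2 = k / 2 := by omega
          rw [heq, ← sum_even_eq k hke y, h2]
        rw [hx1, hxm1, zero_add]
      · -- j.val > 0
        obtain ⟨d, hd⟩ := id hj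
        have hvalp : (j + 1).val = j.val + 1 := val_add_one_of_even k hke j hj
        have hvalm : (j - 1).val = j.val - 1 := val_sub_one_of_pos k j hv
        have hxp : x (j + 1) = ∑ m ∈ Finset.range (j.val / 2 + 1), y ((2 * m : ℕ) : ZMod k) := by
          rw [hxodd _ hodd1, hvalp]
          have heq : (j.val + 1 + 1) / 2 = j.val / 2 + 1 := by omega
          rw [heq]
        have hxm : x (j - 1) = ∑ m ∈ Finset.range (j.val / 2), y ((2 * m : ℕ) : ZMod k) := by
          rw [hxodd _ hodd2, hvalm]
          have heq : (j.val - 1 + 1) / 2 = j.val / 2 := by omega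
          rw [heq]
        rw [hxp, hxm, Finset.sum_range_succ]
        have hj2 : ((2 * (j.val / 2) : ℕ) : ZMod k) = j := by
          have h : 2 * (j.val / 2) = j.val := by omega
          rw [h, ZMod.natCast_zmod_val]
        rw [hj2, ← add_assoc, CharTwo.add_self_eq_zero, zero_add]
    · rw [if_neg hj, eq_comm]
      exact h1 j (Nat.not_even_iff_odd.mp hj)
end

section
/- Let k be a positive even natural number and let D : (ZMod k → ZMod 2) → (ZMod k → ZMod 2) be the ℤ/2-linear map given by (D x)(j) = x(j-1) + x(j+1) when j is even and (D x)(j) = 0 when j is odd (parity of j ∈ ZMod k meaning parity of its canonical representative, which is well defined since k is even). Let ∂ : (ZMod k → ZMod 2) × (ZMod k → ZMod 2) → (ZMod k → ZMod 2) × (ZMod k → ZMod 2) be the ℤ/2-linear map ∂(q, p) = (0, D p). Then the range of ∂ is contained in the kernel of ∂, and the quotient vector space ker(∂)/range(∂) has dimension k + 2 over ZMod 2. -/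
/-!
`D p` vanishes at odd sites and `D` only reads odd sites, so `D ∘ D = 0`; as `∂ = inr ∘ D ∘ snd`,
also `∂ ∘ ∂ = 0`. For an endomorphism with `range ≤ ker`, `dim H + 2 rank = dim V` by
rank–nullity; here `dim V = 2k` and `rank ∂ = rank D = k - dim ker D`, so everything reduces to
`2 dim ker D = k + 2`. A kernel element is arbitrary on the `k / 2` even sites, while the equation
at an even site `j` reads `x (j - 1) = x (j + 1)` in characteristic two, which makes it constant
on the odd sites.
-/

open Module

theorem Submodule.finrank_quotient_comap_subtype_add_finrank {K V : Type*} [DivisionRing K]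
    [AddCommGroup V] [Module K V] {p q : Submodule K V} [FiniteDimensional K p] (h : q ≤ p) :
    finrank K (p ⧸ q.comap p.subtype) + finrank K q = finrank K p := by
  rw [← (Submodule.comapSubtypeEquivOfLe h).finrank_eq]
  exact Submodule.finrank_quotient_add_finrank _

theorem LinearMap.finrank_homology_add_two_mul_finrank_range {K V : Type*} [DivisionRing K]
    [AddCommGroup V] [Module K V] [FiniteDimensional K V] {f : V →ₗ[K] V}
    (h : range f ≤ ker f) :
    finrank K (ker f ⧸ (range f).comap (ker f).subtype) + 2 * finrank K (range f) =
      finrank K V := by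
  rw [← f.finrank_range_add_finrank_ker, ← Submodule.finrank_quotient_comap_subtype_add_finrank h]
  ring

section InrCompSnd

variable {R M N P : Type*} [Ring R] [AddCommGroup M] [Module R M] [AddCommGroup N] [Module R N]
  [AddCommGroup P] [Module R P]

theorem LinearMap.finrank_range_inr_comp_comp_snd (f : M →ₗ[R] N) :
    finrank R (range (inr R P N ∘ₗ f ∘ₗ snd R P M)) = finrank R (range f) := by
  rw [range_comp, range_comp_of_range_eq_top _ (range_eq_top.mpr snd_surjective),
    ← (Submodule.equivMapOfInjective _ inr_injective _).finrank_eq]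

theorem LinearMap.range_inr_comp_comp_snd_le_ker {f : M →ₗ[R] M} (hf : f ∘ₗ f = 0) :
    range (inr R P M ∘ₗ f ∘ₗ snd R P M) ≤ ker (inr R P M ∘ₗ f ∘ₗ snd R P M) := by
  rintro _ ⟨x, rfl⟩
  simpa using LinearMap.congr_fun hf x.2

end InrCompSnd

theorem ZMod.even_val_natCast_iff {k : ℕ} (hk : Even k) (n : ℕ) :
    Even (n : ZMod k).val ↔ Even n := by
  rw [ZMod.val_natCast]
  conv_rhs => rw [← Nat.mod_add_div n k]
  simp [Nat.even_add, hk.mul_right]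

section Parity

variable {k : ℕ} [NeZero k]

theorem ZMod.even_val_add_one_iff (hk : Even k) (j : ZMod k) :
    Even (j + 1).val ↔ ¬Even j.val := by
  rw [← ZMod.natCast_zmod_val j, ← Nat.cast_succ, ZMod.even_val_natCast_iff hk,
    Nat.even_add_one, ZMod.natCast_zmod_val]

theorem ZMod.even_val_sub_one_iff (hk : Even k) (j : ZMod k) :
    Even (j - 1).val ↔ ¬Even j.val := by
  rw [← not_iff_not, not_not, ← ZMod.even_val_add_one_iff hk, sub_add_cancel]

theorem ZMod.not_even_val_one (hk : Even k) : ¬Even (1 : ZMod k).val := by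
  simpa using ZMod.even_val_add_one_iff hk 0

theorem ZMod.two_mul_card_even_val (hk : Even k) :
    2 * Fintype.card {j : ZMod k // Even j.val} = k := by
  have e : {j : ZMod k // Even j.val} ≃ {j : ZMod k // ¬Even j.val} :=
    (Equiv.addRight 1).subtypeEquiv fun j => by
      rw [Equiv.coe_addRight, ZMod.even_val_add_one_iff hk, not_not]
  have := Fintype.card_subtype_compl (fun j : ZMod k => Even j.val)
  have := Fintype.card_subtype_le (fun j : ZMod k => Even j.val)
  rw [← Fintype.card_congr e, ZMod.card] at *
  omega

end Parity

def evenSiteNeighbourSum (R : Type*) [Semiring R] (k : ℕ) : (ZMod k → R) →ₗ[R] (ZMod k → R) where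
  toFun x j := if Even j.val then x (j - 1) + x (j + 1) else 0
  map_add' x y := by
    ext j; by_cases h : Even j.val <;> simp [h, add_add_add_comm]
  map_smul' c x := by
    ext j; by_cases h : Even j.val <;> simp [h, mul_add]

theorem evenSiteNeighbourSum_apply {R : Type*} [Semiring R] {k : ℕ} (x : ZMod k → R)
    (j : ZMod k) :
    evenSiteNeighbourSum R k x j = if Even j.val then x (j - 1) + x (j + 1) else 0 :=
  rfl

section EvenSiteNeighbourSum

variable {k : ℕ} [NeZero k] (hk : Even k)
include hk

theorem evenSiteNeighbourSum_comp_self (R : Type*) [Semiring R] :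
    evenSiteNeighbourSum R k ∘ₗ evenSiteNeighbourSum R k = 0 := by
  ext x j
  simp only [LinearMap.comp_apply, evenSiteNeighbourSum_apply, LinearMap.zero_apply, Pi.zero_apply,
    ZMod.even_val_sub_one_iff hk, ZMod.even_val_add_one_iff hk]
  split_ifs <;> simp

variable {F : Type*} [Field F] [CharP F 2]

theorem apply_eq_apply_one_of_mem_ker_evenSiteNeighbourSum {x : ZMod k → F}
    (hx : x ∈ LinearMap.ker (evenSiteNeighbourSum F k)) {j : ZMod k} (hj : ¬Even j.val) :
    x j = x 1 := by
  have step : ∀ m : ℕ, x ((2 * m + 1 : ℕ) : ZMod k) = x 1 := by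
    intro m
    induction m with
    | zero => simp
    | succ m ih =>
      have h := congrFun (LinearMap.mem_ker.mp hx) ((2 * m + 2 : ℕ) : ZMod k)
      rw [evenSiteNeighbourSum_apply, Pi.zero_apply, if_pos ((ZMod.even_val_natCast_iff hk _).mpr
        ⟨m + 1, by ring⟩)] at h
      rw [← ih]
      convert (CharTwo.add_eq_zero.mp h).symm using 2 <;> push_cast <;> ring
  obtain ⟨m, hm⟩ := Nat.not_even_iff_odd.mp hj
  rw [← step m, ← hm, ZMod.natCast_zmod_val]

theorem dite_even_val_mem_ker_evenSiteNeighbourSum (f : {j : ZMod k // Even j.val} → F) (c : F) :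
    (fun j => if h : Even j.val then f ⟨j, h⟩ else c) ∈
      LinearMap.ker (evenSiteNeighbourSum F k) := by
  ext j
  rw [evenSiteNeighbourSum_apply, Pi.zero_apply]
  by_cases hj : Even j.val
  · simp [hj, ZMod.even_val_sub_one_iff hk, ZMod.even_val_add_one_iff hk,
      CharTwo.add_self_eq_zero]
  · rw [if_neg hj]

def kerEvenSiteNeighbourSumEquiv :
    LinearMap.ker (evenSiteNeighbourSum F k) ≃ₗ[F] ({j : ZMod k // Even j.val} → F) × F where
  toFun x := (fun j => x.1 j, x.1 1)
  map_add' _ _ := rfl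
  map_smul' _ _ := rfl
  invFun fc := ⟨_, dite_even_val_mem_ker_evenSiteNeighbourSum hk fc.1 fc.2⟩
  left_inv x := by
    ext j
    by_cases hj : Even j.val
    · simp [hj]
    · simp [hj, apply_eq_apply_one_of_mem_ker_evenSiteNeighbourSum hk x.2 hj]
  right_inv fc := by
    ext j
    · simp [j.2]
    · simp [ZMod.not_even_val_one hk]

theorem two_mul_finrank_ker_evenSiteNeighbourSum :
    2 * finrank F (LinearMap.ker (evenSiteNeighbourSum F k)) = k + 2 := by
  rw [(kerEvenSiteNeighbourSumEquiv hk).finrank_eq, finrank_prod, finrank_fintype_fun_eq_card,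
    finrank_self, mul_add, ZMod.two_mul_card_even_val hk, mul_one]

end EvenSiteNeighbourSum

/-- Proposition 3.17 (combinatorial content): the full log Floer differential
`∂(q, p) = (0, D p)` satisfies `range ∂ ≤ ker ∂`, and the cohomology
`ker ∂ / range ∂` has dimension `k + 2` over `ℤ/2`. -/
theorem log_floer_cohomology_single_lagrangian
    (k : ℕ) (hk : 0 < k) (hke : Even k)
    (D : (ZMod k → ZMod 2) →ₗ[ZMod 2] (ZMod k → ZMod 2))
    (hD : ∀ x : ZMod k → ZMod 2, ∀ j : ZMod k,
      D x j = if Even j.val then x (j - 1) + x (j + 1) else 0)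
    (bnd : ((ZMod k → ZMod 2) × (ZMod k → ZMod 2)) →ₗ[ZMod 2]
      ((ZMod k → ZMod 2) × (ZMod k → ZMod 2)))
    (hbnd : ∀ qp : (ZMod k → ZMod 2) × (ZMod k → ZMod 2), bnd qp = (0, D qp.2)) :
    LinearMap.range bnd ≤ LinearMap.ker bnd ∧
      Module.finrank (ZMod 2)
        ((LinearMap.ker bnd) ⧸
          (LinearMap.range bnd).comap (LinearMap.ker bnd).subtype) = k + 2 := by
  have : NeZero k := ⟨hk.ne'⟩
  obtain rfl : D = evenSiteNeighbourSum (ZMod 2) k := LinearMap.ext fun x => funext (hD x)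
  obtain rfl : bnd = LinearMap.inr _ _ _ ∘ₗ evenSiteNeighbourSum _ k ∘ₗ LinearMap.snd _ _ _ :=
    LinearMap.ext hbnd
  have hle := LinearMap.range_inr_comp_comp_snd_le_ker (P := ZMod k → ZMod 2)
    (evenSiteNeighbourSum_comp_self hke (ZMod 2))
  refine ⟨hle, ?_⟩
  have hH := LinearMap.finrank_homology_add_two_mul_finrank_range hle
  have hrk := (evenSiteNeighbourSum (ZMod 2) k).finrank_range_add_finrank_ker
  have hker := two_mul_finrank_ker_evenSiteNeighbourSum hke (F := ZMod 2)
  simp only [LinearMap.finrank_range_inr_comp_comp_snd, finrank_prod, finrank_fintype_fun_eq_card,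
    ZMod.card] at hH hrk
  omega
end

section
/- Let k be a positive even natural number and let D : (ZMod k → ZMod 2) → (ZMod k → ZMod 2) be the ℤ/2-linear map given by (D x)(j) = x(j-1) + x(j+1) when j is even and (D x)(j) = 0 when j is odd (parity of j ∈ ZMod k meaning parity of its canonical representative, which is well defined since k is even). Then the subspace of all x in the kernel of D that satisfy x(j) = 0 for every j with even canonical representative has dimension 1 over ZMod 2; it is spanned by the indicator vector of the odd-index positions. -/
/-!
Since `k` is even, the parity of the canonical representative is compatible with the
arithmetic of `ZMod k`, so `j ± 1` is odd whenever `j` is even. Hence the equation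
`(D x)(j + 1) = 0` at an odd `j` reads `x j = x (j + 2)` over `ℤ/2`: an element of the
degree-0 kernel is constant on the odd positions and zero on the even ones, i.e. a multiple
of the odd indicator, which itself lies in the kernel because `1 + 1 = 0`.
-/

namespace ZMod

variable {k : ℕ}

theorem even_val_natCast_iff_s6 (hk : 2 ∣ k) (n : ℕ) : Even (n : ZMod k).val ↔ Even n := by
  rw [val_natCast, Nat.even_iff, Nat.even_iff, Nat.mod_mod_of_dvd n hk]

theorem even_val_add_one_iff_s6 [NeZero k] (hk : 2 ∣ k) (j : ZMod k) :
    Even (j + 1).val ↔ ¬Even j.val := by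
  have hj : j + 1 = ((j.val + 1 : ℕ) : ZMod k) := by push_cast [natCast_zmod_val]; rfl
  rw [hj, even_val_natCast_iff_s6 hk, Nat.even_add_one]

theorem odd_val_sub_one_of_even [NeZero k] (hk : 2 ∣ k) {j : ZMod k} (hj : Even j.val) :
    Odd (j - 1).val := by
  rw [← Nat.not_even_iff_odd, ← even_val_add_one_iff_s6 hk, sub_add_cancel]
  exact hj

theorem odd_val_add_one_of_even [NeZero k] (hk : 2 ∣ k) {j : ZMod k} (hj : Even j.val) :
    Odd (j + 1).val := by
  rw [← Nat.not_even_iff_odd, even_val_add_one_iff_s6 hk, not_not]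
  exact hj

theorem eq_at_one_of_odd_val {α : Type*} [NeZero k] (hk : 2 ∣ k) {x : ZMod k → α}
    (hx : ∀ j : ZMod k, Odd j.val → x (j + 2) = x j) {j : ZMod k} (hj : Odd j.val) :
    x j = x 1 := by
  obtain ⟨m, hm⟩ := hj
  suffices ∀ m : ℕ, x ((2 * m + 1 : ℕ) : ZMod k) = x 1 by
    rw [← this m, ← hm, natCast_zmod_val]
  intro m
  induction m with
  | zero => simp
  | succ m ih =>
    have hodd : Odd ((2 * m + 1 : ℕ) : ZMod k).val := by
      rw [← Nat.not_even_iff_odd, even_val_natCast_iff_s6 hk, Nat.not_even_iff_odd]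
      exact odd_two_mul_add_one m
    rw [← ih, ← hx _ hodd]
    congr 1
    push_cast
    ring

end ZMod

open ZMod

variable {k : ℕ}

def oddIndicator (k : ℕ) : ZMod k → ZMod 2 := fun j => if Odd j.val then 1 else 0

theorem oddIndicator_one (hk : 2 ∣ k) : oddIndicator k 1 = 1 := by
  have h : Odd (((1 : ℕ) : ZMod k)).val := by
    rw [← Nat.not_even_iff_odd, even_val_natCast_iff_s6 hk]
    decide
  rw [Nat.cast_one] at h
  simp [oddIndicator, h]

theorem oddIndicator_ne_zero (hk : 2 ∣ k) : oddIndicator k ≠ 0 := fun h => by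
  simpa [oddIndicator_one hk] using congrFun h 1

theorem oddIndicator_of_even {j : ZMod k} (hj : Even j.val) : oddIndicator k j = 0 := by
  simp [oddIndicator, Nat.not_odd_iff_even.mpr hj]

theorem oddIndicator_sub_one_add_add_one [NeZero k] (hk : 2 ∣ k) {j : ZMod k}
    (hj : Even j.val) : oddIndicator k (j - 1) + oddIndicator k (j + 1) = 0 := by
  simp only [oddIndicator, odd_val_sub_one_of_even hk hj, odd_val_add_one_of_even hk hj,
    if_true]
  decide

theorem eq_smul_oddIndicator [NeZero k] (hk : 2 ∣ k) {x : ZMod k → ZMod 2}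
    (hcycle : ∀ j : ZMod k, Even j.val → x (j - 1) + x (j + 1) = 0)
    (heven : ∀ j : ZMod k, Even j.val → x j = 0) :
    x = x 1 • oddIndicator k := by
  have hstep : ∀ j : ZMod k, Odd j.val → x (j + 2) = x j := fun j hj => by
    have h := hcycle (j + 1) (by rw [even_val_add_one_iff_s6 hk, Nat.not_even_iff_odd]; exact hj)
    rw [add_sub_cancel_right, add_assoc, one_add_one_eq_two, CharTwo.add_eq_zero] at h
    exact h.symm
  funext j
  by_cases hj : Odd j.val
  · simp [oddIndicator, hj, eq_at_one_of_odd_val hk hstep hj]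
  · have hj : Even j.val := Nat.not_odd_iff_even.mp hj
    simp [heven j hj, oddIndicator_of_even hj]

/-- The degree-0 part of the kernel of the combinatorial log Floer differential
(the elements of the kernel vanishing on all even-index coordinates) has
dimension 1 over `ℤ/2`, spanned by the indicator vector of the odd positions. -/
theorem log_floer_degree_zero_kernel
    (k : ℕ) (hk : 0 < k) (hke : Even k)
    (D : (ZMod k → ZMod 2) →ₗ[ZMod 2] (ZMod k → ZMod 2))
    (hD : ∀ x : ZMod k → ZMod 2, ∀ j : ZMod k,
      D x j = if Even j.val then x (j - 1) + x (j + 1) else 0)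
    (S : Submodule (ZMod 2) (ZMod k → ZMod 2))
    (hS : ∀ x : ZMod k → ZMod 2,
      x ∈ S ↔ (D x = 0 ∧ ∀ j : ZMod k, Even j.val → x j = 0)) :
    Module.finrank (ZMod 2) S = 1 ∧
      S = Submodule.span (ZMod 2)
        {fun j : ZMod k => if Odd j.val then (1 : ZMod 2) else 0} := by
  have : NeZero k := ⟨hk.ne'⟩
  have h2k : 2 ∣ k := even_iff_two_dvd.mp hke
  have hmem : ∀ x, x ∈ S ↔ (∀ j : ZMod k, Even j.val → x (j - 1) + x (j + 1) = 0) ∧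
      ∀ j : ZMod k, Even j.val → x j = 0 := fun x => by
    simp only [hS, funext_iff, hD, Pi.zero_apply, ite_eq_right_iff]
  have hspan : S = Submodule.span (ZMod 2) {oddIndicator k} := by
    refine le_antisymm (fun x hx => ?_) ?_
    · obtain ⟨hcycle, heven⟩ := (hmem x).mp hx
      exact Submodule.mem_span_singleton.mpr ⟨x 1, (eq_smul_oddIndicator h2k hcycle heven).symm⟩
    · rw [Submodule.span_le, Set.singleton_subset_iff, SetLike.mem_coe, hmem]
      exact ⟨fun j hj => oddIndicator_sub_one_add_add_one h2k hj,
        fun j hj => oddIndicator_of_even hj⟩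
  exact ⟨by rw [hspan, finrank_span_singleton (oddIndicator_ne_zero h2k)], hspan⟩
end
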